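/- Let M = ⟨n₁,n₂,n₃⟩ be a numerical monoid of embedding dimension 3 and set q = (n₃−n₁)/gcd(n₃−n₁, n₂−n₁). For every m ∈ M: if m − n₂·q ∈ M then c_eq(m) = q = c_eq(M), and if m − n₂·q ∉ M (in particular if m < n₂·q) then c_eq(m) = 0. Consequently, c_eq(m) = c_eq(M) for every m ∈ M with m > n₂·q + F(M), i.e. the element-wise equivalent catenary degree is eventually constant. -/
import Mathlib


/-- The length of a factorization. -/
def fLen {k : ℕ} (z : Fin k → ℕ) : ℕ := ∑ i, z i

/-- The distance between two factorizations:
`max{|z|,|z'|} - |gcd(z,z')|` where the gcd is the coordinatewise minimum. -/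
def fDist {k : ℕ} (z z' : Fin k → ℕ) : ℕ :=
  max (fLen z) (fLen z') - ∑ i, min (z i) (z' i)

/-- The set of factorizations of `m` with respect to the generators `n`. -/
def Facts {k : ℕ} (n : Fin k → ℕ) (m : ℕ) : Set (Fin k → ℕ) :=
  {z | ∑ i, z i * n i = m}

/-- `z` and `z'` are joined by an `N`-chain of factorizations of `m`. -/
def Connects {k : ℕ} (n : Fin k → ℕ) (m N : ℕ) (z z' : Fin k → ℕ) : Prop :=
  ∃ t : ℕ, ∃ f : Fin (t + 1) → Fin k → ℕ,
    f 0 = z ∧ f (Fin.last t) = z' ∧ (∀ i, f i ∈ Facts n m) ∧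
    ∀ i : Fin t, fDist (f i.castSucc) (f i.succ) ≤ N

/-- `z` and `z'` are joined by an `N`-chain all of whose terms have length `|z|`. -/
def ConnectsEq {k : ℕ} (n : Fin k → ℕ) (m N : ℕ) (z z' : Fin k → ℕ) : Prop :=
  ∃ t : ℕ, ∃ f : Fin (t + 1) → Fin k → ℕ,
    f 0 = z ∧ f (Fin.last t) = z' ∧ (∀ i, f i ∈ Facts n m) ∧
    (∀ i, fLen (f i) = fLen z) ∧
    ∀ i : Fin t, fDist (f i.castSucc) (f i.succ) ≤ N

/-- `z` and `z'` are joined by a monotone `N`-chain (the lengths are weakly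
increasing or weakly decreasing along the chain). -/
def ConnectsMon {k : ℕ} (n : Fin k → ℕ) (m N : ℕ) (z z' : Fin k → ℕ) : Prop :=
  ∃ t : ℕ, ∃ f : Fin (t + 1) → Fin k → ℕ,
    f 0 = z ∧ f (Fin.last t) = z' ∧ (∀ i, f i ∈ Facts n m) ∧
    (Monotone (fun i => fLen (f i)) ∨ Antitone (fun i => fLen (f i))) ∧
    ∀ i : Fin t, fDist (f i.castSucc) (f i.succ) ≤ N

/-- The catenary degree of an element. -/
noncomputable def catDeg {k : ℕ} (n : Fin k → ℕ) (m : ℕ) : ℕ :=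
  sInf {N | ∀ z ∈ Facts n m, ∀ z' ∈ Facts n m, Connects n m N z z'}

/-- The equivalent catenary degree of an element. -/
noncomputable def catEq {k : ℕ} (n : Fin k → ℕ) (m : ℕ) : ℕ :=
  sInf {N | ∀ z ∈ Facts n m, ∀ z' ∈ Facts n m, fLen z = fLen z' → ConnectsEq n m N z z'}

/-- The monotone catenary degree of an element. -/
noncomputable def catMon {k : ℕ} (n : Fin k → ℕ) (m : ℕ) : ℕ :=
  sInf {N | ∀ z ∈ Facts n m, ∀ z' ∈ Facts n m, ConnectsMon n m N z z'}

/-- The set of lengths of factorizations of `m`. -/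
def LSet {k : ℕ} (n : Fin k → ℕ) (m : ℕ) : Set ℕ := fLen '' Facts n m

/-- Two lengths `a < b` in the length set of `m` are adjacent. -/
def AdjLen {k : ℕ} (n : Fin k → ℕ) (m a b : ℕ) : Prop :=
  a ∈ LSet n m ∧ b ∈ LSet n m ∧ a < b ∧
    ∀ l ∈ LSet n m, a ≤ l → l ≤ b → l = a ∨ l = b

/-- The adjacent catenary degree of an element: the least `N` such that for every
pair of adjacent lengths the minimum distance between the corresponding sets of
factorizations is at most `N`. -/
noncomputable def catAdj {k : ℕ} (n : Fin k → ℕ) (m : ℕ) : ℕ :=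
  sInf {N | ∀ a b : ℕ, AdjLen n m a b →
    ∃ z ∈ Facts n m, ∃ z' ∈ Facts n m, fLen z = a ∧ fLen z' = b ∧ fDist z z' ≤ N}

/-- Set-wise catenary degree: the maximum over all elements of the monoid. -/
noncomputable def catDegM {k : ℕ} (n : Fin k → ℕ) : ℕ := sSup (catDeg n '' {m | (Facts n m).Nonempty})

/-- Set-wise equivalent catenary degree. -/
noncomputable def catEqM {k : ℕ} (n : Fin k → ℕ) : ℕ := sSup (catEq n '' {m | (Facts n m).Nonempty})

/-- Set-wise adjacent catenary degree. -/
noncomputable def catAdjM {k : ℕ} (n : Fin k → ℕ) : ℕ := sSup (catAdj n '' {m | (Facts n m).Nonempty})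

/-- Set-wise monotone catenary degree. -/
noncomputable def catMonM {k : ℕ} (n : Fin k → ℕ) : ℕ := sSup (catMon n '' {m | (Facts n m).Nonempty})


section AuxED3

lemma facts_mem (n₁ n₂ n₃ m : ℕ) (z : Fin 3 → ℕ) :
    z ∈ Facts ![n₁, n₂, n₃] m ↔ z 0 * n₁ + z 1 * n₂ + z 2 * n₃ = m := by
  simp [Facts, Fin.sum_univ_three]

lemma fLen3 (z : Fin 3 → ℕ) : fLen z = z 0 + z 1 + z 2 := by
  simp [fLen, Fin.sum_univ_three]

lemma fDist3 (z z' : Fin 3 → ℕ) :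
    fDist z z' = max (fLen z) (fLen z')
      - (min (z 0) (z' 0) + min (z 1) (z' 1) + min (z 2) (z' 2)) := by
  simp [fDist, Fin.sum_univ_three]

lemma fDist_comm {k : ℕ} (z z' : Fin k → ℕ) : fDist z z' = fDist z' z := by
  simp [fDist, max_comm, min_comm]

lemma vec3_eq (z z' : Fin 3 → ℕ) (h0 : z 0 = z' 0) (h1 : z 1 = z' 1) (h2 : z 2 = z' 2) :
    z = z' := by funext j; fin_cases j <;> assumption

lemma pair_rep (a b x : ℕ) (cop : Nat.Coprime a b) (ha : 0 < a) (hb : 0 < b)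
    (hx : a * b ≤ x) : ∃ u v : ℕ, u * a + v * b = x := by
  rcases Nat.lt_or_ge a 2 with h | h2a
  · interval_cases a
    · exact ⟨x, 0, by omega⟩
  rcases Nat.lt_or_ge b 2 with h | h2b
  · interval_cases b
    · exact ⟨0, x, by omega⟩
  have frob := frobeniusNumber_pair cop h2a h2b
  have hx' : x ∈ AddSubmonoid.closure ({a, b} : Set ℕ) := by
    by_contra hmem
    have := frob.2 hmem
    have : a + b ≤ a * b := Nat.add_le_mul h2a h2b
    omega
  rw [AddSubmonoid.mem_closure_pair] at hx'
  obtain ⟨u, v, huv⟩ := hx'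
  exact ⟨u, v, by simpa [smul_eq_mul] using huv⟩

lemma rep3 (n₁ n₂ n₃ : ℕ) (h1 : 0 < n₁) (h2 : 0 < n₂) (h3 : 0 < n₃)
    (hgcd : Nat.gcd (Nat.gcd n₁ n₂) n₃ = 1) :
    ∀ x, Nat.gcd n₁ n₂ * n₃ + n₁ * n₂ ≤ x → ∃ u v w : ℕ, u * n₁ + v * n₂ + w * n₃ = x := by
  intro x hx
  set g := Nat.gcd n₁ n₂ with hg
  have hgpos : 0 < g := Nat.gcd_pos_of_pos_left _ h1
  have stepA : ∃ s c : ℕ, c < g ∧ s * g + c * n₃ = x := by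
    rcases Nat.lt_or_ge g 2 with h | h2g
    · interval_cases g
      · exact ⟨x, 0, by omega, by omega⟩
    · have cop : Nat.Coprime g n₃ := hgcd
      obtain ⟨u, v, huv⟩ := pair_rep g n₃ x cop hgpos h3 (by omega)
      refine ⟨u + (v / g) * n₃, v % g, Nat.mod_lt _ hgpos, ?_⟩
      calc (u + v / g * n₃) * g + v % g * n₃
          = u * g + (v / g * g + v % g) * n₃ := by ring
        _ = u * g + v * n₃ := by rw [Nat.div_add_mod']
        _ = x := huv
  obtain ⟨s, c, hc, hsc⟩ := stepA
  set a₁ := n₁ / g with ha₁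
  set a₂ := n₂ / g with ha₂
  have e₁ : a₁ * g = n₁ := Nat.div_mul_cancel (Nat.gcd_dvd_left _ _)
  have e₂ : a₂ * g = n₂ := Nat.div_mul_cancel (Nat.gcd_dvd_right _ _)
  have ha₁p : 0 < a₁ := Nat.div_pos (Nat.le_of_dvd h1 (Nat.gcd_dvd_left _ _)) hgpos
  have ha₂p : 0 < a₂ := Nat.div_pos (Nat.le_of_dvd h2 (Nat.gcd_dvd_right _ _)) hgpos
  have cop12 : Nat.Coprime a₁ a₂ := Nat.coprime_div_gcd_div_gcd hgpos
  have hcn : c * n₃ ≤ g * n₃ := Nat.mul_le_mul_right _ (le_of_lt hc)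
  have hsg : n₁ * n₂ ≤ s * g := by omega
  have hs : a₁ * a₂ ≤ s := by
    have h1' : a₁ * a₂ * g ≤ a₁ * a₂ * g * g := Nat.le_mul_of_pos_right _ hgpos
    have h2' : a₁ * a₂ * g * g = n₁ * n₂ := by rw [← e₁, ← e₂]; ring
    have : a₁ * a₂ * g ≤ s * g := by omega
    exact Nat.le_of_mul_le_mul_right this hgpos
  obtain ⟨u, v, huv⟩ := pair_rep a₁ a₂ s cop12 ha₁p ha₂p hs
  refine ⟨u, v, c, ?_⟩
  have h5 : (u * a₁ + v * a₂) * g = s * g := by rw [huv]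
  have h' : u * n₁ + v * n₂ = s * g := by rw [← e₁, ← e₂]; linarith [h5]
  omega

lemma aux_diff (n₁ p A q d : ℕ) (hd : 0 < d) (hq : 0 < q) (hpA : p + A = q)
    (hcop : Nat.Coprime p q) (a b c a' b' c' : ℕ)
    (hz : a * n₁ + b * (n₁ + p * d) + c * (n₁ + q * d)
        = a' * n₁ + b' * (n₁ + p * d) + c' * (n₁ + q * d))
    (hl : a + b + c = a' + b' + c') :
    ∃ t : ℕ, (a = a' + t * A ∧ b' = b + t * q ∧ c = c' + t * p)
           ∨ (a' = a + t * A ∧ b = b' + t * q ∧ c' = c + t * p) := by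
  have key : ((b : ℤ) * p + c * q) * d = ((b' : ℤ) * p + c' * q) * d := by
    have hz' : (a : ℤ) * n₁ + b * (n₁ + p * d) + c * (n₁ + q * d)
        = (a' : ℤ) * n₁ + b' * (n₁ + p * d) + c' * (n₁ + q * d) := by exact_mod_cast hz
    have hl' : (a : ℤ) + b + c = (a' : ℤ) + b' + c' := by exact_mod_cast hl
    linear_combination hz' - (n₁ : ℤ) * hl'
  have hd0 : (d : ℤ) ≠ 0 := by exact_mod_cast hd.ne'
  have hq0 : (q : ℤ) ≠ 0 := by exact_mod_cast hq.ne'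
  have key2 : (b : ℤ) * p + c * q = (b' : ℤ) * p + c' * q :=
    mul_right_cancel₀ hd0 key
  have hdvd : (q : ℤ) ∣ ((b' : ℤ) - b) * p := ⟨(c : ℤ) - c', by linarith⟩
  have hco : IsCoprime (q : ℤ) (p : ℤ) := (Nat.isCoprime_iff_coprime.mpr hcop).symm
  obtain ⟨t', ht'⟩ : (q : ℤ) ∣ ((b' : ℤ) - b) := hco.dvd_of_dvd_mul_right hdvd
  have hc' : (c : ℤ) - c' = t' * p := by
    have h : ((c : ℤ) - c') * q = (t' * p) * q := by
      linear_combination key2 + (p : ℤ) * ht'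
    exact mul_right_cancel₀ hq0 h
  have hA : (p : ℤ) + A = q := by exact_mod_cast hpA
  have hl' : (a : ℤ) + b + c = (a' : ℤ) + b' + c' := by exact_mod_cast hl
  have ha' : (a : ℤ) - a' = t' * A := by
    linear_combination hl' + ht' - hc' - t' * hA
  rcases le_or_gt 0 t' with h | h
  · have htn : ((t'.toNat : ℤ)) = t' := Int.toNat_of_nonneg h
    refine ⟨t'.toNat, Or.inl ⟨?_, ?_, ?_⟩⟩
    · have : (a : ℤ) = a' + (t'.toNat : ℤ) * A := by rw [htn]; linarith
      exact_mod_cast this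
    · have : (b' : ℤ) = b + (t'.toNat : ℤ) * q := by rw [htn]; linarith
      exact_mod_cast this
    · have : (c : ℤ) = c' + (t'.toNat : ℤ) * p := by rw [htn]; linarith
      exact_mod_cast this
  · have htn : (((-t').toNat : ℤ)) = -t' := Int.toNat_of_nonneg (by omega)
    refine ⟨(-t').toNat, Or.inr ⟨?_, ?_, ?_⟩⟩
    · have : (a' : ℤ) = a + ((-t').toNat : ℤ) * A := by rw [htn]; linarith
      exact_mod_cast this
    · have : (b : ℤ) = b' + ((-t').toNat : ℤ) * q := by rw [htn]; linarith
      exact_mod_cast this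
    · have : (c' : ℤ) = c + ((-t').toNat : ℤ) * p := by rw [htn]; linarith
      exact_mod_cast this

lemma aux_chain (n₁ n₂ n₃ p A q m t : ℕ) (hpA : p + A = q)
    (hK : q * n₂ = A * n₁ + p * n₃)
    (z : Fin 3 → ℕ) (hz : z ∈ Facts ![n₁, n₂, n₃] m)
    (ha : t * A ≤ z 0) (hc : t * p ≤ z 2) :
    ConnectsEq ![n₁, n₂, n₃] m q z ![z 0 - t * A, z 1 + t * q, z 2 - t * p] := by
  rw [facts_mem] at hz
  refine ⟨t, fun i => ![z 0 - (i : ℕ) * A, z 1 + (i : ℕ) * q, z 2 - (i : ℕ) * p],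
    ?_, ?_, ?_, ?_, ?_⟩
  · apply vec3_eq <;> simp
  · simp [Fin.last]
  · intro i
    rw [facts_mem]
    have hi : (i : ℕ) ≤ t := by omega
    have hiA : (i : ℕ) * A ≤ t * A := Nat.mul_le_mul_right _ hi
    have hip : (i : ℕ) * p ≤ t * p := Nat.mul_le_mul_right _ hi
    have hKi : (i : ℕ) * (q * n₂) = (i : ℕ) * (A * n₁) + (i : ℕ) * (p * n₃) := by
      rw [hK, Nat.mul_add]
    have e0 : (z 0 - (i : ℕ) * A) * n₁ = z 0 * n₁ - ((i : ℕ) * A) * n₁ := Nat.sub_mul _ _ _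
    have e1 : (z 1 + (i : ℕ) * q) * n₂ = z 1 * n₂ + ((i : ℕ) * q) * n₂ := Nat.add_mul _ _ _
    have e2 : (z 2 - (i : ℕ) * p) * n₃ = z 2 * n₃ - ((i : ℕ) * p) * n₃ := Nat.sub_mul _ _ _
    have g0 : ((i : ℕ) * A) * n₁ ≤ z 0 * n₁ := Nat.mul_le_mul_right _ (le_trans hiA ha)
    have g2 : ((i : ℕ) * p) * n₃ ≤ z 2 * n₃ := Nat.mul_le_mul_right _ (le_trans hip hc)
    have r1 : ((i : ℕ) * q) * n₂ = (i : ℕ) * (q * n₂) := by ring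
    have r2 : ((i : ℕ) * A) * n₁ = (i : ℕ) * (A * n₁) := by ring
    have r3 : ((i : ℕ) * p) * n₃ = (i : ℕ) * (p * n₃) := by ring
    simp only [Matrix.cons_val_zero, Matrix.cons_val_one, Matrix.head_cons,
      Matrix.cons_val_two, Matrix.tail_cons]
    omega
  · intro i
    have hi : (i : ℕ) ≤ t := by omega
    have hiA : (i : ℕ) * A ≤ t * A := Nat.mul_le_mul_right _ hi
    have hip : (i : ℕ) * p ≤ t * p := Nat.mul_le_mul_right _ hi
    have hiq : (i : ℕ) * p + (i : ℕ) * A = (i : ℕ) * q := by rw [← Nat.mul_add, hpA]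
    rw [fLen3, fLen3]
    simp only [Matrix.cons_val_zero, Matrix.cons_val_one, Matrix.head_cons,
      Matrix.cons_val_two, Matrix.tail_cons]
    omega
  · intro i
    have hi1 : (i : ℕ) + 1 ≤ t := by omega
    have hiA : ((i : ℕ) + 1) * A ≤ t * A := Nat.mul_le_mul_right _ hi1
    have hip : ((i : ℕ) + 1) * p ≤ t * p := Nat.mul_le_mul_right _ hi1
    have sA : ((i : ℕ) + 1) * A = (i : ℕ) * A + A := Nat.succ_mul _ _
    have sp : ((i : ℕ) + 1) * p = (i : ℕ) * p + p := Nat.succ_mul _ _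
    have sq : ((i : ℕ) + 1) * q = (i : ℕ) * q + q := Nat.succ_mul _ _
    have hiq : (i : ℕ) * p + (i : ℕ) * A = (i : ℕ) * q := by rw [← Nat.mul_add, hpA]
    rw [fDist3, fLen3, fLen3]
    simp only [Fin.coe_castSucc, Fin.val_succ, Matrix.cons_val_zero, Matrix.cons_val_one,
      Matrix.head_cons, Matrix.cons_val_two, Matrix.tail_cons]
    omega

lemma connectsEq_symm {k : ℕ} (n : Fin k → ℕ) (m N : ℕ) (z z' : Fin k → ℕ)
    (h : ConnectsEq n m N z z') : ConnectsEq n m N z' z := by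
  obtain ⟨t, f, h0, hl, hf, hlen, hd⟩ := h
  refine ⟨t, fun i => f ⟨t - (i : ℕ), by omega⟩, ?_, ?_, fun i => hf _, ?_, ?_⟩
  · have pf : t - ((0 : Fin (t + 1)) : ℕ) < t + 1 := by omega
    have e : (⟨t - ((0 : Fin (t + 1)) : ℕ), pf⟩ : Fin (t + 1)) = Fin.last t := by
      apply Fin.ext; simp
    exact (congrArg f e).trans hl
  · have pf : t - ((Fin.last t : Fin (t + 1)) : ℕ) < t + 1 := by omega
    have e : (⟨t - ((Fin.last t : Fin (t + 1)) : ℕ), pf⟩ : Fin (t + 1)) = 0 := by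
      apply Fin.ext; simp
    exact (congrArg f e).trans h0
  · intro i
    rw [hlen, ← hl, hlen]
  · intro i
    have pfj : t - 1 - (i : ℕ) < t := by omega
    have pf1 : t - ((i.castSucc : Fin (t + 1)) : ℕ) < t + 1 := by omega
    have pf2 : t - ((i.succ : Fin (t + 1)) : ℕ) < t + 1 := by omega
    have e1 : (⟨t - ((i.castSucc : Fin (t + 1)) : ℕ), pf1⟩ : Fin (t + 1))
        = Fin.succ ⟨t - 1 - (i : ℕ), pfj⟩ := by
      apply Fin.ext; simp [Fin.val_succ]; omega
    have e2 : (⟨t - ((i.succ : Fin (t + 1)) : ℕ), pf2⟩ : Fin (t + 1))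
        = Fin.castSucc ⟨t - 1 - (i : ℕ), pfj⟩ := by
      apply Fin.ext; simp [Fin.coe_castSucc, Fin.val_succ]; omega
    show fDist (f ⟨t - ((i.castSucc : Fin (t + 1)) : ℕ), pf1⟩)
        (f ⟨t - ((i.succ : Fin (t + 1)) : ℕ), pf2⟩) ≤ N
    rw [congrArg f e1, congrArg f e2, fDist_comm]
    exact hd _

lemma aux_dist_lb (p A q t : ℕ) (hpA : p + A = q) (z z' : Fin 3 → ℕ)
    (h0 : z 0 = z' 0 + t * A) (h1 : z' 1 = z 1 + t * q) (h2 : z 2 = z' 2 + t * p)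
    (hne : z ≠ z') : q ≤ fDist z z' := by
  have ht : t ≠ 0 := by
    rintro rfl
    exact hne (vec3_eq _ _ (by omega) (by omega) (by omega))
  have htq : q ≤ t * q := Nat.le_mul_of_pos_left _ (by omega)
  have hiq : t * p + t * A = t * q := by rw [← Nat.mul_add, hpA]
  rw [fDist3, fLen3, fLen3]
  omega

lemma exists_ne_step {α : Type*} (t : ℕ) (f : Fin (t + 1) → α)
    (h : f 0 ≠ f (Fin.last t)) : ∃ i : Fin t, f i.castSucc ≠ f i.succ := by
  by_contra hc
  push_neg at hc
  apply h
  have key : ∀ j : Fin (t + 1), f 0 = f j := by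
    intro j
    induction j using Fin.induction with
    | zero => rfl
    | succ i ih => rw [ih, hc i]
  exact key _

end AuxED3

/-- In an embedding dimension 3 numerical monoid
`⟨n₁,n₂,n₃⟩`, with `q = (n₃-n₁)/gcd(n₃-n₁,n₂-n₁)` and `F` the Frobenius number:
for `m ∈ M`, if `m - n₂·q ∈ M` (i.e. `m = n₂·q + x` for some `x ∈ M`) then
`c_eq(m) = q = c_eq(M)`, and otherwise `c_eq(m) = 0`. Consequently
`c_eq(m) = c_eq(M)` for all `m ∈ M` with `m > n₂·q + F`: the element-wise
equivalent catenary degree is eventually constant. -/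
theorem ed3_equivalent_eventually_constant (n₁ n₂ n₃ : ℕ) (h1 : 0 < n₁)
    (h12 : n₁ < n₂) (h23 : n₂ < n₃)
    (hgcd : Nat.gcd (Nat.gcd n₁ n₂) n₃ = 1)
    (hmin1 : ¬ ∃ u v : ℕ, u * n₂ + v * n₃ = n₁)
    (hmin2 : ¬ ∃ u v : ℕ, u * n₁ + v * n₃ = n₂)
    (hmin3 : ¬ ∃ u v : ℕ, u * n₁ + v * n₂ = n₃) :
    ∀ q F : ℕ, q = (n₃ - n₁) / Nat.gcd (n₃ - n₁) (n₂ - n₁) →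
      F = sSup {x : ℕ | ¬ (Facts ![n₁, n₂, n₃] x).Nonempty} →
      (∀ m : ℕ, (Facts ![n₁, n₂, n₃] m).Nonempty →
        ((∃ x : ℕ, (Facts ![n₁, n₂, n₃] x).Nonempty ∧ m = n₂ * q + x) →
          catEq ![n₁, n₂, n₃] m = q ∧
          catEq ![n₁, n₂, n₃] m = catEqM ![n₁, n₂, n₃]) ∧
        ((¬ ∃ x : ℕ, (Facts ![n₁, n₂, n₃] x).Nonempty ∧ m = n₂ * q + x) →
          catEq ![n₁, n₂, n₃] m = 0)) ∧
      (∀ m : ℕ, (Facts ![n₁, n₂, n₃] m).Nonempty → n₂ * q + F < m →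
        catEq ![n₁, n₂, n₃] m = catEqM ![n₁, n₂, n₃]) := by
  intro q F hqdef hFdef
  set d := Nat.gcd (n₃ - n₁) (n₂ - n₁) with hddef
  have hd : 0 < d := Nat.pos_of_ne_zero (fun h0 => by have := Nat.eq_zero_of_gcd_eq_zero_left h0; omega)
  set p := (n₂ - n₁) / d with hpdef
  have hdvd2 : d ∣ (n₂ - n₁) := Nat.gcd_dvd_right _ _
  have hdvd3 : d ∣ (n₃ - n₁) := Nat.gcd_dvd_left _ _
  have hpd : p * d = n₂ - n₁ := Nat.div_mul_cancel hdvd2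
  have hqd : q * d = n₃ - n₁ := by rw [hqdef]; exact Nat.div_mul_cancel hdvd3
  have h2 : n₂ = n₁ + p * d := by omega
  have h3 : n₃ = n₁ + q * d := by omega
  have hp : 0 < p := Nat.pos_of_ne_zero (fun h => by rw [h] at hpd; simp at hpd; omega)
  have hq : 0 < q := Nat.pos_of_ne_zero (fun h => by rw [h] at hqd; simp at hqd; omega)
  have hpq : p < q := by
    have : p * d < q * d := by omega
    exact Nat.lt_of_mul_lt_mul_right this
  set A := q - p with hAdef
  have hpA : p + A = q := by omega
  have hcop : Nat.Coprime p q := by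
    have h := Nat.coprime_div_gcd_div_gcd (m := n₃ - n₁) (n := n₂ - n₁) (by rw [← hddef]; exact hd)
    rw [← hddef] at h
    rw [hpdef, hqdef]
    exact h.symm
  have hK : q * n₂ = A * n₁ + p * n₃ := by rw [h2, h3, ← hpA]; ring
  -- characterization of the existence of x
  have hx_iff : ∀ m : ℕ, (∃ x : ℕ, (Facts ![n₁, n₂, n₃] x).Nonempty ∧ m = n₂ * q + x)
      ↔ ∃ z ∈ Facts ![n₁, n₂, n₃] m, q ≤ z 1 := by
    intro m
    constructor
    · rintro ⟨x, ⟨w, hw⟩, rfl⟩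
      rw [facts_mem] at hw
      refine ⟨![w 0, w 1 + q, w 2], ?_, by simp⟩
      rw [facts_mem]
      simp only [Matrix.cons_val_zero, Matrix.cons_val_one, Matrix.head_cons,
        Matrix.cons_val_two, Matrix.tail_cons]
      have e1 : (w 1 + q) * n₂ = w 1 * n₂ + q * n₂ := Nat.add_mul _ _ _
      have e2 : q * n₂ = n₂ * q := Nat.mul_comm _ _
      omega
    · rintro ⟨z, hz, hq1⟩
      rw [facts_mem] at hz
      have e1 : (z 1 - q) * n₂ = z 1 * n₂ - q * n₂ := Nat.sub_mul _ _ _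
      have e2 : q * n₂ ≤ z 1 * n₂ := Nat.mul_le_mul_right _ hq1
      have e3 : q * n₂ = n₂ * q := Nat.mul_comm _ _
      refine ⟨m - n₂ * q, ⟨![z 0, z 1 - q, z 2], ?_⟩, by omega⟩
      rw [facts_mem]
      simp only [Matrix.cons_val_zero, Matrix.cons_val_one, Matrix.head_cons,
        Matrix.cons_val_two, Matrix.tail_cons]
      omega
  -- any two equal-length factorizations connect with q-chains
  have hSq : ∀ m : ℕ, ∀ z ∈ Facts ![n₁, n₂, n₃] m, ∀ z' ∈ Facts ![n₁, n₂, n₃] m,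
      fLen z = fLen z' → ConnectsEq ![n₁, n₂, n₃] m q z z' := by
    intro m z hz z' hz' hlen
    have hz0 := (facts_mem n₁ n₂ n₃ m z).mp hz
    have hz0' := (facts_mem n₁ n₂ n₃ m z').mp hz'
    have hzz : z 0 * n₁ + z 1 * (n₁ + p * d) + z 2 * (n₁ + q * d)
        = z' 0 * n₁ + z' 1 * (n₁ + p * d) + z' 2 * (n₁ + q * d) := by
      rw [← h2, ← h3]; omega
    have hll : z 0 + z 1 + z 2 = z' 0 + z' 1 + z' 2 := by
      rw [fLen3, fLen3] at hlen; omega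
    obtain ⟨t, hcase | hcase⟩ := aux_diff n₁ p A q d hd hq hpA hcop _ _ _ _ _ _ hzz hll
    · have hchain := aux_chain n₁ n₂ n₃ p A q m t hpA hK z hz (by omega) (by omega)
      have he : (![z 0 - t * A, z 1 + t * q, z 2 - t * p] : Fin 3 → ℕ) = z' := by
        apply vec3_eq <;>
          simp only [Matrix.cons_val_zero, Matrix.cons_val_one, Matrix.head_cons,
            Matrix.cons_val_two, Matrix.tail_cons] <;> omega
      rwa [he] at hchain
    · have hchain := aux_chain n₁ n₂ n₃ p A q m t hpA hK z' hz' (by omega) (by omega)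
      have he : (![z' 0 - t * A, z' 1 + t * q, z' 2 - t * p] : Fin 3 → ℕ) = z := by
        apply vec3_eq <;>
          simp only [Matrix.cons_val_zero, Matrix.cons_val_one, Matrix.head_cons,
            Matrix.cons_val_two, Matrix.tail_cons] <;> omega
      rw [he] at hchain
      exact connectsEq_symm _ _ _ _ _ hchain
  -- distinct equal-length factorizations are at distance at least q
  have hdlb : ∀ m : ℕ, ∀ z z' : Fin 3 → ℕ, z ∈ Facts ![n₁, n₂, n₃] m →
      z' ∈ Facts ![n₁, n₂, n₃] m → fLen z = fLen z' → z ≠ z' → q ≤ fDist z z' := by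
    intro m z z' hz hz' hlen hne
    have hz0 := (facts_mem n₁ n₂ n₃ m z).mp hz
    have hz0' := (facts_mem n₁ n₂ n₃ m z').mp hz'
    have hzz : z 0 * n₁ + z 1 * (n₁ + p * d) + z 2 * (n₁ + q * d)
        = z' 0 * n₁ + z' 1 * (n₁ + p * d) + z' 2 * (n₁ + q * d) := by
      rw [← h2, ← h3]; omega
    have hll : z 0 + z 1 + z 2 = z' 0 + z' 1 + z' 2 := by
      rw [fLen3, fLen3] at hlen; omega
    obtain ⟨t, hcase | hcase⟩ := aux_diff n₁ p A q d hd hq hpA hcop _ _ _ _ _ _ hzz hll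
    · exact aux_dist_lb p A q t hpA z z' hcase.1 hcase.2.1 hcase.2.2 hne
    · rw [fDist_comm]
      exact aux_dist_lb p A q t hpA z' z hcase.1 hcase.2.1 hcase.2.2 (Ne.symm hne)
  -- catEq = q when a factorization with second coordinate ≥ q exists
  have hcatq : ∀ m : ℕ, (∃ z ∈ Facts ![n₁, n₂, n₃] m, q ≤ z 1) →
      catEq ![n₁, n₂, n₃] m = q := by
    rintro m ⟨z', hz', hq1⟩
    have hset : q ∈ {N | ∀ z ∈ Facts ![n₁, n₂, n₃] m, ∀ z'' ∈ Facts ![n₁, n₂, n₃] m,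
        fLen z = fLen z'' → ConnectsEq ![n₁, n₂, n₃] m N z z''} :=
      fun z hz z'' hz'' hl => hSq m z hz z'' hz'' hl
    apply le_antisymm
    · exact Nat.sInf_le hset
    · apply le_csInf ⟨q, hset⟩
      rintro N hN
      have hz0' := (facts_mem n₁ n₂ n₃ m z').mp hz'
      set w : Fin 3 → ℕ := ![z' 0 + A, z' 1 - q, z' 2 + p] with hw
      have hw0 : w 0 = z' 0 + A := rfl
      have hw1 : w 1 = z' 1 - q := rfl
      have hw2 : w 2 = z' 2 + p := rfl
      have hwmem : w ∈ Facts ![n₁, n₂, n₃] m := by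
        rw [facts_mem, hw0, hw1, hw2]
        have e0 : (z' 0 + A) * n₁ = z' 0 * n₁ + A * n₁ := Nat.add_mul _ _ _
        have e1 : (z' 1 - q) * n₂ = z' 1 * n₂ - q * n₂ := Nat.sub_mul _ _ _
        have e2 : (z' 2 + p) * n₃ = z' 2 * n₃ + p * n₃ := Nat.add_mul _ _ _
        have e3 : q * n₂ ≤ z' 1 * n₂ := Nat.mul_le_mul_right _ hq1
        omega
      have hwlen : fLen w = fLen z' := by
        rw [fLen3, fLen3, hw0, hw1, hw2]; omega
      have hne : w ≠ z' := by
        intro h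
        have := congrFun h 1
        rw [hw1] at this
        omega
      obtain ⟨t, f, h0, hlast, hf, hlen, hd'⟩ := hN w hwmem z' hz' hwlen
      obtain ⟨i, hi⟩ := exists_ne_step t f (by rw [h0, hlast]; exact hne)
      refine le_trans ?_ (hd' i)
      exact hdlb m _ _ (hf _) (hf _) (by rw [hlen, hlen]) hi
  -- catEq = 0 otherwise
  have hcat0 : ∀ m : ℕ, (¬ ∃ z ∈ Facts ![n₁, n₂, n₃] m, q ≤ z 1) →
      catEq ![n₁, n₂, n₃] m = 0 := by
    intro m hno
    have h0 : 0 ∈ {N | ∀ z ∈ Facts ![n₁, n₂, n₃] m, ∀ z'' ∈ Facts ![n₁, n₂, n₃] m,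
        fLen z = fLen z'' → ConnectsEq ![n₁, n₂, n₃] m N z z''} := by
      intro z hz z' hz' hlen
      have hzz' : z = z' := by
        by_contra hne
        have hz0 := (facts_mem n₁ n₂ n₃ m z).mp hz
        have hz0' := (facts_mem n₁ n₂ n₃ m z').mp hz'
        have hzz : z 0 * n₁ + z 1 * (n₁ + p * d) + z 2 * (n₁ + q * d)
            = z' 0 * n₁ + z' 1 * (n₁ + p * d) + z' 2 * (n₁ + q * d) := by
          rw [← h2, ← h3]; omega
        have hll : z 0 + z 1 + z 2 = z' 0 + z' 1 + z' 2 := by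
          rw [fLen3, fLen3] at hlen; omega
        obtain ⟨t, hcase | hcase⟩ := aux_diff n₁ p A q d hd hq hpA hcop _ _ _ _ _ _ hzz hll
        · rcases Nat.eq_zero_or_pos t with ht | ht
          · rw [ht] at hcase
            exact hne (vec3_eq _ _ (by omega) (by omega) (by omega))
          · have : q ≤ t * q := Nat.le_mul_of_pos_left _ ht
            exact hno ⟨z', hz', by omega⟩
        · rcases Nat.eq_zero_or_pos t with ht | ht
          · rw [ht] at hcase
            exact hne (vec3_eq _ _ (by omega) (by omega) (by omega))
          · have : q ≤ t * q := Nat.le_mul_of_pos_left _ ht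
            exact hno ⟨z, hz, by omega⟩
      subst hzz'
      exact ⟨0, fun _ => z, rfl, rfl, fun _ => hz, fun _ => rfl, fun i => i.elim0⟩
    exact Nat.le_zero.mp (Nat.sInf_le h0)
  -- the element n₂ * q realizes catEq = q
  have hmqmem : (![0, q, 0] : Fin 3 → ℕ) ∈ Facts ![n₁, n₂, n₃] (n₂ * q) := by
    rw [facts_mem]
    simp only [Matrix.cons_val_zero, Matrix.cons_val_one, Matrix.head_cons,
      Matrix.cons_val_two, Matrix.tail_cons]
    ring
  have hmq : (Facts ![n₁, n₂, n₃] (n₂ * q)).Nonempty := ⟨_, hmqmem⟩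
  have hwitq : ∃ z ∈ Facts ![n₁, n₂, n₃] (n₂ * q), q ≤ z 1 := ⟨![0, q, 0], hmqmem, by simp⟩
  -- the global value
  have hub : ∀ y ∈ catEq ![n₁, n₂, n₃] '' {m | (Facts ![n₁, n₂, n₃] m).Nonempty}, y ≤ q := by
    rintro y ⟨m', hm', rfl⟩
    by_cases hwit : ∃ z ∈ Facts ![n₁, n₂, n₃] m', q ≤ z 1
    · exact le_of_eq (hcatq m' hwit)
    · rw [hcat0 m' hwit]; exact Nat.zero_le _
  have hMval : catEqM ![n₁, n₂, n₃] = q := by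
    apply le_antisymm
    · exact csSup_le ⟨catEq ![n₁, n₂, n₃] (n₂ * q), ⟨n₂ * q, hmq, rfl⟩⟩ hub
    · exact le_csSup ⟨q, hub⟩ ⟨n₂ * q, hmq, (hcatq _ hwitq)⟩
  refine ⟨?_, ?_⟩
  · intro m _hm
    refine ⟨?_, ?_⟩
    · intro hx
      have hwit := (hx_iff m).mp hx
      exact ⟨hcatq m hwit, (hcatq m hwit).trans hMval.symm⟩
    · intro hx
      exact hcat0 m (fun hwit => hx ((hx_iff m).mpr hwit))
  · intro m _hm hlt
    have hB := rep3 n₁ n₂ n₃ (by omega) (by omega) (by omega) hgcd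
    have hbdd : BddAbove {x : ℕ | ¬ (Facts ![n₁, n₂, n₃] x).Nonempty} := by
      refine ⟨Nat.gcd n₁ n₂ * n₃ + n₁ * n₂, ?_⟩
      rintro x hxmem
      by_contra hgt
      push_neg at hgt
      obtain ⟨u, v, w, h⟩ := hB x (by omega)
      refine hxmem ⟨![u, v, w], ?_⟩
      rw [facts_mem]
      simpa using h
    have hxM : (Facts ![n₁, n₂, n₃] (m - n₂ * q)).Nonempty := by
      by_contra hno
      have hle : m - n₂ * q ≤ F := by
        rw [hFdef]
        exact le_csSup hbdd hno
      omega
    have hwit := (hx_iff m).mp ⟨m - n₂ * q, hxM, by omega⟩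
    exact (hcatq m hwit).trans hMval.symm
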